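/- For every integer m ≥ 3, the orbit of the initial value 2^m − 1 under Q goes to infinity: Q^n(2^m − 1) → ∞ as n → ∞. -/

import Mathlib

/-!
Put `x = 2 ^ m - 1`. Since `x` is odd, every point of the orbit stays divisible by `x`. The odd
part of the orbit never decreases: halving keeps it, and at an odd point `y` it becomes `y` times
the odd part of `y - 1`. That second factor exceeds `1`, for otherwise `y = 2 ^ a + 1` would be a
multiple of `x`, which is impossible as `2 ^ a` is congruent modulo `x` to a power of two below
`2 ^ (m - 1)`. An odd point is reached after finitely many halvings, so the odd part strictly
increases infinitely often; it bounds the orbit from below, which therefore tends to infinity.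
-/

/-- The divide-or-choose-2 map: `Q n = n/2` if `n` is even, `Q n = n*(n-1)/2` if `n` is odd. -/
def Q (n : ℕ) : ℕ := if n % 2 = 0 then n / 2 else n * (n - 1) / 2

open Filter Function

theorem Q_two_mul (k : ℕ) : Q (2 * k) = k := by
  simp [Q]

theorem Q_of_odd {y : ℕ} (hy : Odd y) : Q y = y * ((y - 1) / 2) := by
  rw [Q, if_neg (by rw [Nat.odd_iff.mp hy]; decide),
    Nat.mul_div_assoc _ (Nat.Odd.sub_odd hy odd_one).two_dvd]

theorem Q_iterate_two_pow_mul (k z : ℕ) : Q^[k] (2 ^ k * z) = z := by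
  induction k with
  | zero => simp
  | succ k ih => rw [iterate_succ_apply, pow_succ', mul_assoc, Q_two_mul, ih]

theorem Q_iterate_factorization_two (y : ℕ) : Q^[y.factorization 2] y = ordCompl[2] y := by
  have h := Q_iterate_two_pow_mul (y.factorization 2) (ordCompl[2] y)
  rwa [Nat.ordProj_mul_ordCompl_eq_self] at h

theorem Nat.ordCompl_two_mul (k : ℕ) : ordCompl[2] (2 * k) = ordCompl[2] k := by
  rw [Nat.ordCompl_mul, Nat.Prime.factorization_self Nat.prime_two, pow_one, Nat.div_self two_pos,
    one_mul]

theorem Nat.ordCompl_two_of_odd {y : ℕ} (hy : Odd y) : ordCompl[2] y = y := by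
  rw [Nat.factorization_eq_zero_of_not_dvd hy.not_two_dvd_nat, pow_zero, Nat.div_one]

theorem ordCompl_two_Q_of_even {y : ℕ} (hy : Even y) : ordCompl[2] (Q y) = ordCompl[2] y := by
  obtain ⟨k, rfl⟩ := hy
  rw [← two_mul, Q_two_mul, Nat.ordCompl_two_mul]

theorem ordCompl_two_Q_of_odd {y : ℕ} (hy : Odd y) :
    ordCompl[2] (Q y) = y * ordCompl[2] (y - 1) := by
  obtain ⟨k, rfl⟩ := hy
  rw [Q_of_odd ⟨k, rfl⟩, Nat.ordCompl_mul, Nat.ordCompl_two_of_odd ⟨k, rfl⟩,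
    Nat.add_sub_cancel, Nat.mul_div_cancel_left _ two_pos, Nat.ordCompl_two_mul]

section

variable {x y : ℕ}

theorem dvd_Q (hx : Odd x) (h : x ∣ y) : x ∣ Q y := by
  rcases Nat.even_or_odd y with ⟨k, rfl⟩ | hy
  · rw [← two_mul] at h ⊢
    rw [Q_two_mul]
    exact (Nat.Coprime.dvd_mul_left (Nat.coprime_two_right.mpr hx)).mp h
  · rw [Q_of_odd hy]
    exact h.mul_right _

theorem dvd_Q_iterate (hx : Odd x) (h : x ∣ y) (n : ℕ) : x ∣ Q^[n] y := by
  induction n with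
  | zero => exact h
  | succ n ih => rw [iterate_succ_apply']; exact dvd_Q hx ih

variable (hx : ∀ a, ¬ x ∣ 2 ^ a + 1)
include hx

theorem lt_ordCompl_two_Q (hxy : x ∣ y) (hy : Odd y) : y < ordCompl[2] (Q y) := by
  have hy1 : y - 1 ≠ 0 := by
    rintro h
    obtain rfl : y = 1 := by have := hy.pos; omega
    exact hx 0 (by rw [Nat.dvd_one.mp hxy]; exact one_dvd _)
  have hne : ordCompl[2] (y - 1) ≠ 1 := by
    intro h
    have := Nat.ordProj_mul_ordCompl_eq_self (y - 1) 2
    rw [h, mul_one] at this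
    exact hx _ (by rwa [this, Nat.sub_add_cancel hy.pos])
  rw [ordCompl_two_Q_of_odd hy]
  have := Nat.ordCompl_pos 2 hy1
  exact lt_mul_right hy.pos (by omega)

theorem ordCompl_two_le_ordCompl_two_Q (hxy : x ∣ y) : ordCompl[2] y ≤ ordCompl[2] (Q y) := by
  rcases Nat.even_or_odd y with hy | hy
  · exact (ordCompl_two_Q_of_even hy).ge
  · exact (Nat.ordCompl_le y 2).trans (lt_ordCompl_two_Q hx hxy hy).le

theorem monotone_ordCompl_two_Q_iterate (hx_odd : Odd x) (hxy : x ∣ y) :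
    Monotone fun n => ordCompl[2] (Q^[n] y) :=
  monotone_nat_of_le_succ fun n => by
    rw [iterate_succ_apply']
    exact ordCompl_two_le_ordCompl_two_Q hx (dvd_Q_iterate hx_odd hxy n)

theorem exists_ordCompl_two_lt_ordCompl_two_Q_iterate (hx_odd : Odd x) (hxy : x ∣ y)
    (hy : y ≠ 0) :
    ∃ k, ordCompl[2] y < ordCompl[2] (Q^[k] y) := by
  have h := dvd_Q_iterate hx_odd hxy (y.factorization 2)
  rw [Q_iterate_factorization_two] at h
  refine ⟨y.factorization 2 + 1, ?_⟩
  rw [iterate_succ_apply', Q_iterate_factorization_two]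
  refine lt_ordCompl_two_Q hx h ?_
  exact Nat.odd_iff.mpr (Nat.two_dvd_ne_zero.mp (Nat.not_dvd_ordCompl Nat.prime_two hy))

theorem tendsto_Q_iterate (hx_odd : Odd x) (hxy : x ∣ y) (hy : y ≠ 0) :
    Tendsto (fun n => Q^[n] y) atTop atTop := by
  have hmono := monotone_ordCompl_two_Q_iterate hx hx_odd hxy
  have hunbounded : ∀ b, ∃ n, b ≤ ordCompl[2] (Q^[n] y) := by
    intro b
    induction b with
    | zero => exact ⟨0, Nat.zero_le _⟩
    | succ b ih =>
      obtain ⟨n, hn⟩ := ih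
      have hpos : 0 < ordCompl[2] (Q^[n] y) := (Nat.ordCompl_pos 2 hy).trans_le (hmono n.zero_le)
      have hne : Q^[n] y ≠ 0 := by
        rintro h0
        simp [h0] at hpos
      obtain ⟨k, hk⟩ := exists_ordCompl_two_lt_ordCompl_two_Q_iterate hx hx_odd
        (dvd_Q_iterate hx_odd hxy n) hne
      exact ⟨k + n, by rw [iterate_add_apply]; omega⟩
  exact tendsto_atTop_mono (fun n => Nat.ordCompl_le _ 2)
    (tendsto_atTop_atTop_of_monotone hmono hunbounded)

end

theorem two_pow_sub_one_not_dvd_two_pow_add_one {m : ℕ} (hm : 3 ≤ m) (a : ℕ) :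
    ¬ 2 ^ m - 1 ∣ 2 ^ a + 1 := by
  induction a using Nat.strong_induction_on with
  | _ a ih =>
    intro h
    rcases lt_or_ge a m with ha | ha
    · have h1 : 2 ^ a ≤ 2 ^ (m - 1) := Nat.pow_le_pow_right two_pos (by omega)
      have h2 : 2 ^ m = 2 * 2 ^ (m - 1) := by rw [← pow_succ']; congr 1; omega
      have h3 : 4 ≤ 2 ^ (m - 1) := by
        calc 4 = 2 ^ 2 := by norm_num
          _ ≤ 2 ^ (m - 1) := Nat.pow_le_pow_right two_pos (by omega)
      have := Nat.le_of_dvd (by positivity) h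
      omega
    · have hsplit : 2 ^ a + 1 = 2 ^ (a - m) * (2 ^ m - 1) + (2 ^ (a - m) + 1) := by
        have hpow : 2 ^ (a - m) * 2 ^ m = 2 ^ a := by rw [← pow_add, Nat.sub_add_cancel ha]
        have : 2 ^ (a - m) ≤ 2 ^ a := Nat.pow_le_pow_right two_pos (Nat.sub_le a m)
        rw [Nat.mul_sub, mul_one, hpow]
        omega
      rw [hsplit] at h
      exact ih (a - m) (by omega) ((Nat.dvd_add_right (dvd_mul_left _ _)).mp h)

/-- For every integer `m ≥ 3`, the orbit of `2^m - 1` under `Q` goes to infinity. -/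
theorem stmt_16 (m : ℕ) (hm : 3 ≤ m) :
    Filter.Tendsto (fun n : ℕ => Q^[n] (2 ^ m - 1)) Filter.atTop Filter.atTop := by
  have h8 : 2 ^ 3 ≤ 2 ^ m := Nat.pow_le_pow_right two_pos hm
  refine tendsto_Q_iterate (two_pow_sub_one_not_dvd_two_pow_add_one hm) ?_ dvd_rfl (by omega)
  exact Nat.Even.sub_odd (by omega) (Nat.even_pow.mpr ⟨even_two, by omega⟩) odd_one
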